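/- For any fixed n, the unique hyperbinary expansion of n with no digit equal to 2 (the binary expansion) is the maximum of the set of hyperbinary expansions of n in shortlex order, and the unique expansion with no digit equal to 0 is the minimum. -/
import Mathlib


/-- The integer represented by a word of digits (most significant first). -/
def hval (w : List ℕ) : ℕ := w.foldl (fun a d => 2 * a + d) 0

/-- `w` is a hyperbinary expansion of `n`: digits in {0,1,2}, nonzero leading
digit, representing `n`.  (The empty word is the unique expansion of `0`.) -/
def IsHyp (n : ℕ) (w : List ℕ) : Prop :=
  (∀ d ∈ w, d ≤ 2) ∧ w.head? ≠ some 0 ∧ hval w = n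

/-- `b n`: the number of hyperbinary expansions of `n` (so `b 0 = 1`). -/
noncomputable def hb (n : ℕ) : ℕ := Set.ncard {w : List ℕ | IsHyp n w}

/-- A single rewriting step: `02 → 10` or `12 → 20`, a leading `2` treated as `02`. -/
def Step (u v : List ℕ) : Prop :=
  (∃ x y : List ℕ, u = x ++ [0, 2] ++ y ∧ v = x ++ [1, 0] ++ y) ∨
  (∃ x y : List ℕ, u = x ++ [1, 2] ++ y ∧ v = x ++ [2, 0] ++ y) ∨
  (∃ y : List ℕ, u = 2 :: y ∧ v = 1 :: 0 :: y)

/-- Strict shortlex order: first by length, then lexicographically. -/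
def Shortlex (u v : List ℕ) : Prop :=
  u.length < v.length ∨ (u.length = v.length ∧ List.Lex (· < ·) u v)

/-- Number of maximal blocks of consecutive `2`'s in a word. -/
def blocks2 : List ℕ → ℕ
  | [] => 0
  | d :: rest => blocks2 rest + (if d = 2 ∧ rest.head? ≠ some 2 then 1 else 0)

lemma hval_foldl (w : List ℕ) : ∀ a : ℕ, w.foldl (fun a d => 2 * a + d) a = a * 2 ^ w.length + hval w := by
  induction w with
  | nil => intro a; simp [hval]
  | cons d t ih =>
    intro a
    have h0 : hval (d :: t) = d * 2 ^ t.length + hval t := by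
      simp only [hval, List.foldl_cons]
      rw [ih (2 * 0 + d)]; simp [hval]
    simp only [List.foldl_cons, List.length_cons]
    rw [ih (2 * a + d), h0, pow_succ]
    ring

lemma hval_cons (d : ℕ) (t : List ℕ) : hval (d :: t) = d * 2 ^ t.length + hval t := by
  simp only [hval, List.foldl_cons]
  rw [hval_foldl t (2 * 0 + d)]; simp [hval]

lemma hval_le2 (w : List ℕ) (h : ∀ d ∈ w, d ≤ 2) : hval w + 2 ≤ 2 ^ (w.length + 1) := by
  induction w with
  | nil => simp [hval]
  | cons d t ih =>
    have hd : d ≤ 2 := h d (by simp)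
    have ht := ih (fun x hx => h x (by simp [hx]))
    rw [hval_cons]
    simp only [List.length_cons]
    simp only [pow_succ] at *
    nlinarith [pow_pos (by norm_num : (0:ℕ) < 2) t.length]

lemma hval_le1 (w : List ℕ) (h : ∀ d ∈ w, d ≤ 1) : hval w + 1 ≤ 2 ^ w.length := by
  induction w with
  | nil => simp [hval]
  | cons d t ih =>
    have hd : d ≤ 1 := h d (by simp)
    have ht := ih (fun x hx => h x (by simp [hx]))
    rw [hval_cons]
    simp only [List.length_cons]
    rw [pow_succ]
    nlinarith [pow_pos (by norm_num : (0:ℕ) < 2) t.length]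

lemma hval_ge1 (w : List ℕ) (h : ∀ d ∈ w, 1 ≤ d) : 2 ^ w.length ≤ hval w + 1 := by
  induction w with
  | nil => simp [hval]
  | cons d t ih =>
    have hd : 1 ≤ d := h d (by simp)
    have ht := ih (fun x hx => h x (by simp [hx]))
    rw [hval_cons]
    simp only [List.length_cons]
    rw [pow_succ]
    nlinarith [pow_pos (by norm_num : (0:ℕ) < 2) t.length]

lemma lex_max : ∀ u w : List ℕ, u.length = w.length → (∀ d ∈ w, d ≤ 1) →
    hval u = hval w → u = w ∨ List.Lex (· < ·) u w := by
  intro u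
  induction u with
  | nil => intro w hl _ _; left; exact (List.length_eq_zero_iff.mp hl.symm).symm
  | cons a u' ih =>
    intro w hl hw hv
    cases w with
    | nil => simp at hl
    | cons b w' =>
      simp only [List.length_cons] at hl
      have hl' : u'.length = w'.length := by omega
      rw [hval_cons, hval_cons, hl'] at hv
      rcases eq_or_ne a b with rfl | hab
      · have hv' : hval u' = hval w' := by omega
        rcases ih w' (by omega) (fun x hx => hw x (by simp [hx])) hv' with rfl | hlex
        · left; rfl
        · right; exact List.Lex.cons hlex
      · right
        have hb1 := hval_le1 w' (fun x hx => hw x (by simp [hx]))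
        have : a < b := by
          by_contra hle
          have : b + 1 ≤ a := by omega
          have h2 : (b + 1) * 2 ^ w'.length ≤ a * 2 ^ w'.length :=
            Nat.mul_le_mul_right _ this
          have hp := pow_pos (by norm_num : (0:ℕ) < 2) w'.length
          nlinarith
        exact List.Lex.rel this

lemma lex_min : ∀ w u : List ℕ, w.length = u.length → (∀ d ∈ w, 1 ≤ d) →
    (∀ d ∈ u, d ≤ 2) → hval w = hval u → w = u ∨ List.Lex (· < ·) w u := by
  intro w
  induction w with
  | nil => intro u hl _ _ _; left; exact (List.length_eq_zero_iff.mp hl.symm).symm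
  | cons a w' ih =>
    intro u hl hw hu hv
    cases u with
    | nil => simp at hl
    | cons b u' =>
      simp only [List.length_cons] at hl
      have hl' : w'.length = u'.length := by omega
      rw [hval_cons, hval_cons, hl'] at hv
      rcases eq_or_ne a b with rfl | hab
      · have hv' : hval w' = hval u' := by omega
        rcases ih u' (by omega) (fun x hx => hw x (by simp [hx]))
            (fun x hx => hu x (by simp [hx])) hv' with rfl | hlex
        · left; rfl
        · right; exact List.Lex.cons hlex
      · right
        have hw1 := hval_ge1 w' (fun x hx => hw x (by simp [hx]))
        rw [hl'] at hw1
        have hu2 := hval_le2 u' (fun x hx => hu x (by simp [hx]))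
        simp only [pow_succ] at hu2
        have : a < b := by
          by_contra hle
          have : b + 1 ≤ a := by omega
          have h2 : (b + 1) * 2 ^ u'.length ≤ a * 2 ^ u'.length :=
            Nat.mul_le_mul_right _ this
          have hp := pow_pos (by norm_num : (0:ℕ) < 2) u'.length
          nlinarith
        exact List.Lex.rel this

theorem stmt15 (n : ℕ) (hn : 0 < n) :
    (∀ w : List ℕ, IsHyp n w → 2 ∉ w →
      ∀ u : List ℕ, IsHyp n u → u = w ∨ Shortlex u w) ∧
    (∀ w : List ℕ, IsHyp n w → 0 ∉ w →
      ∀ u : List ℕ, IsHyp n u → u = w ∨ Shortlex w u) := by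
  constructor
  · rintro w ⟨hw2, hwh, hwv⟩ hno2 u ⟨hu2, huh, huv⟩
    have hw1 : ∀ d ∈ w, d ≤ 1 := by
      intro d hd
      have h1 := hw2 d hd
      by_contra h
      have : d = 2 := by omega
      exact hno2 (this ▸ hd)
    have hwb := hval_le1 w hw1
    rw [hwv] at hwb
    have hun : u ≠ [] := by
      rintro rfl
      simp [hval] at huv
      omega
    obtain ⟨a, t, rfl⟩ := List.exists_cons_of_ne_nil hun
    have ha : a ≠ 0 := by simpa using huh
    have hlow : 2 ^ t.length ≤ n := by
      rw [← huv, hval_cons]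
      have : 1 ≤ a := by omega
      nlinarith [pow_pos (by norm_num : (0:ℕ) < 2) t.length]
    have hlen : (a :: t).length ≤ w.length := by
      by_contra h
      have h1 : w.length ≤ t.length := by simp only [List.length_cons] at h; omega
      have h2 := Nat.pow_le_pow_right (by norm_num : 1 ≤ 2) h1
      omega
    rcases Nat.lt_or_ge (a :: t).length w.length with hlt | hge
    · right; exact Or.inl hlt
    · have heq : (a :: t).length = w.length := le_antisymm hlen hge
      rcases lex_max (a :: t) w heq hw1 (by rw [hwv, huv]) with h | h
      · left; exact h
      · right; exact Or.inr ⟨heq, h⟩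
  · rintro w ⟨hw2, hwh, hwv⟩ hno0 u ⟨hu2, huh, huv⟩
    have hw1 : ∀ d ∈ w, 1 ≤ d := by
      intro d hd
      by_contra h
      have : d = 0 := by omega
      exact hno0 (this ▸ hd)
    have hwb := hval_ge1 w hw1
    rw [hwv] at hwb
    have hub := hval_le2 u hu2
    rw [huv] at hub
    have hlen : w.length ≤ u.length := by
      by_contra h
      have h1 : u.length + 1 ≤ w.length := by omega
      have h2 := Nat.pow_le_pow_right (by norm_num : 1 ≤ 2) h1
      omega
    rcases Nat.lt_or_ge w.length u.length with hlt | hge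
    · right; exact Or.inl hlt
    · have heq : w.length = u.length := le_antisymm hlen hge
      rcases lex_min w u heq hw1 hu2 (by rw [hwv, huv]) with h | h
      · left; exact h.symm
      · right; exact Or.inr ⟨heq, h⟩
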